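/- Let A be a finite d-regular λ-expander, f : A → {0,1}, and define h_k(a) = E over k-step walks from a of (−1)^{f(a_1)⊕⋯⊕f(a_k)}, ε_k = |E_a[h_k]|, σ_k² = E_a[h_k²] − ε_k². Then for all k ≥ 2: ε_k ≤ |E_a[(−1)^{f(a)}]|·ε_{k−1} + λ σ_{k−1} and E_a[h_k(a)²] ≤ ε_{k−1}² + λ² σ_{k−1}². -/
import Mathlib


open Finset

noncomputable def expec {V : Type*} [Fintype V] (f : V → ℝ) : ℝ :=
  (∑ a, f a) / (Fintype.card V : ℝ)

noncomputable def sdev {V : Type*} [Fintype V] (f : V → ℝ) : ℝ :=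
  Real.sqrt (expec (fun a => f a ^ 2) - (expec f) ^ 2)

noncomputable def edgeE {V : Type*} [Fintype V] {d : ℕ} (N : V → Fin d → V)
    (F : V → V → ℝ) : ℝ :=
  (∑ a, ∑ i, F a (N a i)) / ((Fintype.card V : ℝ) * d)

/-- `A` is a `lam`-expander in the mixing-lemma sense. -/
def IsExpander {V : Type*} [Fintype V] {d : ℕ} (N : V → Fin d → V) (lam : ℝ) : Prop :=
  ∀ f g : V → ℝ,
    |edgeE N (fun a a' => f a * g a') - expec f * expec g| ≤ lam * sdev f * sdev g

/-- The graph given by the rotation map `N` is undirected (the edge multiset is symmetric). -/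
def SymmGraph {V : Type*} [Fintype V] {d : ℕ} (N : V → Fin d → V) : Prop :=
  ∀ F : V → V → ℝ, (∑ a, ∑ i, F a (N a i)) = ∑ a, ∑ i, F (N a i) a

noncomputable def hWalk {V : Type*} {d : ℕ} (N : V → Fin d → V) (f : V → Bool) :
    ℕ → V → ℝ
  | 0, _ => 1
  | k + 1, a => (if f a then (-1 : ℝ) else 1) * ((∑ i, hWalk N f k (N a i)) / d)


section Aux

variable {V : Type*} [Fintype V] [Nonempty V]

lemma expec_const_one : expec (fun _ : V => (1:ℝ)) = 1 := by
  have : (Fintype.card V : ℝ) ≠ 0 := Nat.cast_ne_zero.mpr Fintype.card_ne_zero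
  simp [expec, this]

lemma var_nonneg (f : V → ℝ) : (expec f) ^ 2 ≤ expec (fun a => f a ^ 2) := by
  have hn : (0:ℝ) < (Fintype.card V : ℝ) := by exact_mod_cast Fintype.card_pos
  unfold expec
  rw [div_pow, div_le_div_iff₀ (by positivity) hn]
  have h := Finset.sum_mul_sq_le_sq_mul_sq Finset.univ f (fun _ => (1:ℝ))
  simp only [mul_one, one_pow, Finset.sum_const, Finset.card_univ, nsmul_eq_mul] at h
  nlinarith [h, hn]

lemma sdev_nonneg (f : V → ℝ) : 0 ≤ sdev f := Real.sqrt_nonneg _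

lemma sdev_sq (f : V → ℝ) :
    (sdev f) ^ 2 = expec (fun a => f a ^ 2) - (expec f) ^ 2 :=
  Real.sq_sqrt (sub_nonneg.2 (var_nonneg f))

lemma expec_mul_avg {d : ℕ} (N : V → Fin d → V) (h φ : V → ℝ) :
    expec (fun a => φ a * ((∑ i, h (N a i)) / (d:ℝ))) =
      edgeE N (fun a a' => φ a * h a') := by
  unfold expec edgeE
  have : ∀ a, φ a * ((∑ i, h (N a i)) / (d:ℝ)) = (∑ i, φ a * h (N a i)) / (d:ℝ) := by
    intro a; rw [← mul_div_assoc, Finset.mul_sum]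
  simp_rw [this, ← Finset.sum_div, div_div]
  rw [mul_comm (d:ℝ) (Fintype.card V : ℝ)]

end Aux

/-- One-step recursions for the bias and second moment of the walk-XOR function. -/
theorem stmt4 {V : Type*} [Fintype V] [Nonempty V] {d : ℕ} (hd : 0 < d)
    (N : V → Fin d → V) (lam : ℝ) (hlam : 0 ≤ lam)
    (hexp : IsExpander N lam) (hsymm : SymmGraph N) (f : V → Bool) :
    ∀ k : ℕ, 2 ≤ k →
      |expec (hWalk N f k)| ≤
          |expec (fun a => if f a then (-1 : ℝ) else 1)| * |expec (hWalk N f (k - 1))|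
            + lam * sdev (hWalk N f (k - 1))
        ∧ expec (fun a => (hWalk N f k a) ^ 2) ≤
            |expec (hWalk N f (k - 1))| ^ 2 + lam ^ 2 * (sdev (hWalk N f (k - 1))) ^ 2 := by
  intro k hk
  obtain ⟨m, rfl⟩ : ∃ m, k = m + 1 := ⟨k - 1, (Nat.succ_pred_eq_of_pos (by omega)).symm⟩
  set h : V → ℝ := hWalk N f m with hh
  set χ : V → ℝ := fun a => if f a then (-1:ℝ) else 1 with hχ
  set g : V → ℝ := fun a => (∑ i, h (N a i)) / (d:ℝ) with hg
  have hwalk_eq : hWalk N f (m + 1) = fun a => χ a * g a := rfl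
  have hk1 : m + 1 - 1 = m := rfl
  have hχsq : ∀ a, χ a ^ 2 = 1 := by
    intro a; by_cases hfa : f a <;> simp [hχ, hfa]
  have hχexpec_sq : expec (fun a => χ a ^ 2) = 1 := by
    simp_rw [hχsq]; exact expec_const_one
  have hsχ : sdev χ ≤ 1 := by
    unfold sdev
    rw [hχexpec_sq]
    calc Real.sqrt (1 - expec χ ^ 2) ≤ Real.sqrt 1 := by
          apply Real.sqrt_le_sqrt; nlinarith [sq_nonneg (expec χ)]
      _ = 1 := Real.sqrt_one
  have hS := sdev_nonneg h
  -- Part 1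
  have e1 : expec (hWalk N f (m + 1)) = edgeE N (fun a a' => χ a * h a') := by
    rw [hwalk_eq]; exact expec_mul_avg N h χ
  have hb1 := hexp χ h
  have part1 : |expec (hWalk N f (m + 1))| ≤
      |expec χ| * |expec h| + lam * sdev h := by
    rw [e1]
    calc |edgeE N (fun a a' => χ a * h a')|
        ≤ |edgeE N (fun a a' => χ a * h a') - expec χ * expec h| + |expec χ * expec h| := by
          have := abs_sub_abs_le_abs_sub (edgeE N (fun a a' => χ a * h a')) (expec χ * expec h)
          linarith [abs_nonneg (expec χ * expec h)]
      _ ≤ lam * sdev χ * sdev h + |expec χ| * |expec h| := by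
          rw [abs_mul]; exact add_le_add hb1 le_rfl
      _ ≤ |expec χ| * |expec h| + lam * sdev h := by
          have : lam * sdev χ * sdev h ≤ lam * 1 * sdev h := by
            apply mul_le_mul_of_nonneg_right _ hS
            exact mul_le_mul_of_nonneg_left hsχ hlam
          linarith
  -- Part 2
  have e2 : expec (fun a => hWalk N f (m + 1) a ^ 2) = expec (fun a => g a ^ 2) := by
    rw [hwalk_eq]
    simp_rw [mul_pow, hχsq, one_mul]
  have e3 : expec (fun a => g a ^ 2) = edgeE N (fun a a' => g a * h a') := by
    have : (fun a => g a ^ 2) = fun a => g a * ((∑ i, h (N a i)) / (d:ℝ)) := by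
      funext a; rw [pow_two]
    rw [this]; exact expec_mul_avg N h g
  have e4 : expec g = expec h := by
    have hgeq : expec g = edgeE N (fun a a' => (1:ℝ) * h a') := by
      have : g = fun a => (1:ℝ) * ((∑ i, h (N a i)) / (d:ℝ)) := by
        funext a; rw [one_mul]
      rw [this]; exact expec_mul_avg N h (fun _ => 1)
    have hone := hexp (fun _ => (1:ℝ)) h
    have hsd1 : sdev (fun _ : V => (1:ℝ)) = 0 := by
      unfold sdev
      rw [show (fun (_ : V) => (1:ℝ) ^ 2) = fun _ => (1:ℝ) by funext a; ring,
        expec_const_one]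
      simp
    rw [hsd1, expec_const_one] at hone
    simp only [mul_zero, one_mul] at hone
    have h0 := abs_nonpos_iff.mp (le_trans hone (by norm_num))
    simp only [one_mul] at hgeq
    rw [hgeq]
    linarith [sub_eq_zero.mp h0]
  have hvar : (expec g) ^ 2 ≤ expec (fun a => g a ^ 2) := var_nonneg g
  have hT : (sdev g) ^ 2 = expec (fun a => g a ^ 2) - (expec g) ^ 2 := sdev_sq g
  have hTnn := sdev_nonneg g
  have hb2 := hexp g h
  rw [e4] at hb2 hT hvar
  have key : expec (fun a => g a ^ 2) - (expec h) ^ 2 ≤ lam * sdev g * sdev h := by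
    calc expec (fun a => g a ^ 2) - (expec h) ^ 2
        ≤ |expec (fun a => g a ^ 2) - expec h * expec h| := by
          rw [← pow_two]; exact le_abs_self _
      _ = |edgeE N (fun a a' => g a * h a') - expec h * expec h| := by rw [e3]
      _ ≤ lam * sdev g * sdev h := hb2
  have hT2 : (sdev g) ^ 2 ≤ lam ^ 2 * (sdev h) ^ 2 := by
    nlinarith [sq_nonneg (sdev g - lam * sdev h), hT, key, hTnn, hS, hlam]
  have part2 : expec (fun a => hWalk N f (m + 1) a ^ 2) ≤
      |expec h| ^ 2 + lam ^ 2 * (sdev h) ^ 2 := by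
    rw [e2, sq_abs]
    nlinarith [hT, hT2]
  exact ⟨part1, part2⟩
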